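/- arXiv:2303.07348 — 3 statements merged into one kernel-verified Lean document; each statement's English description precedes it below -/
import Mathlib

section
/- For every real number p > 1, the family α ↦ (2ℕ)^{−pα} = ∏_{n≥1} (2n)^{−p·α_n} is summable over the set 𝓘 of all multiindices, i.e. ∑_{α∈𝓘} (2ℕ)^{−pα} < ∞. -/
abbrev MultiIndex : Type := ℕ →₀ ℕ

/-- `|α| = ∑ₙ αₙ` -/
def msize (α : MultiIndex) : ℕ := α.sum fun _ k => k

/-- `α! = ∏ₙ (αₙ)!` -/
def mfact (α : MultiIndex) : ℕ := α.prod fun _ k => k.factorial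

/-- `(2ℕ)^{cα} = ∏ₙ (2n)^{c·αₙ}`; the index `n : ℕ` stands for the position `n+1 ≥ 1`. -/
noncomputable def wt (c : ℝ) (α : MultiIndex) : ℝ :=
  α.prod fun n k => (2 * ((n : ℝ) + 1)) ^ (c * (k : ℝ))


theorem stmt_2 (p : ℝ) (hp : 1 < p) :
    Summable fun α : MultiIndex => wt (-p) α := by
  classical
  set f : ℕ → ℝ := fun n => (2 * ((n : ℝ) + 1)) ^ (-p) with hf
  have hb : ∀ n : ℕ, (2 : ℝ) ≤ 2 * ((n : ℝ) + 1) := by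
    intro n
    nlinarith [Nat.cast_nonneg (α := ℝ) n]
  have hbpos : ∀ n : ℕ, (0 : ℝ) < 2 * ((n : ℝ) + 1) := fun n => lt_of_lt_of_le two_pos (hb n)
  have hfpos : ∀ n, 0 < f n := fun n => Real.rpow_pos_of_pos (hbpos n) _
  have hfhalf : ∀ n, f n ≤ 1 / 2 := by
    intro n
    have h1 : f n ≤ (2 : ℝ) ^ (-p) :=
      Real.rpow_le_rpow_of_nonpos two_pos (hb n) (by linarith)
    have h2 : (2 : ℝ) ^ (-p) ≤ (2 : ℝ) ^ (-1 : ℝ) :=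
      Real.rpow_le_rpow_of_exponent_le one_le_two (by linarith)
    have h3 : (2 : ℝ) ^ (-1 : ℝ) = 1 / 2 := by
      rw [Real.rpow_neg_one]; norm_num
    exact h1.trans (h2.trans_eq h3)
  have hflt1 : ∀ n, f n < 1 := fun n => lt_of_le_of_lt (hfhalf n) (by norm_num)
  have hsumf : Summable f := by
    have h1 : Summable (fun n : ℕ => ((n : ℝ) + 1) ^ (-p)) := by
      have := (Real.summable_nat_rpow (p := -p)).2 (by linarith)
      have := (summable_nat_add_iff (f := fun n : ℕ => (n : ℝ) ^ (-p)) 1).2 this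
      simpa using this
    apply h1.of_nonneg_of_le (fun n => (hfpos n).le)
    intro n
    apply Real.rpow_le_rpow_of_nonpos (by positivity) (by nlinarith [Nat.cast_nonneg (α := ℝ) n])
      (by linarith)
  set C := ∑' n, f n with hC
  -- rewrite wt as a product of powers of f
  have hwt : ∀ (α : MultiIndex) (T : Finset ℕ), α.support ⊆ T →
      wt (-p) α = ∏ n ∈ T, f n ^ α n := by
    intro α T hT
    rw [wt, Finsupp.prod_of_support_subset α hT _ (by
      intro i _
      simp [Real.rpow_zero])]
    refine Finset.prod_congr rfl fun n _ => ?_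
    rw [hf]
    rw [← Real.rpow_natCast ((2 * ((n : ℝ) + 1)) ^ (-p)) (α n), ← Real.rpow_mul (hbpos n).le]
  have hwt_nonneg : ∀ α : MultiIndex, 0 ≤ wt (-p) α := by
    intro α
    rw [hwt α α.support subset_rfl]
    exact Finset.prod_nonneg fun n _ => pow_nonneg (hfpos n).le _
  apply summable_of_sum_le (c := Real.exp (2 * C)) hwt_nonneg
  intro u
  set T : Finset ℕ := u.sup Finsupp.support with hT
  set M : ℕ := u.sup fun α => T.sup α with hM
  have hsupp : ∀ α ∈ u, α.support ⊆ T := fun α hα => Finset.le_sup hα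
  have hval : ∀ α ∈ u, ∀ n ∈ T, α n ≤ M := by
    intro α hα n hn
    exact le_trans (Finset.le_sup hn) (Finset.le_sup (f := fun α : MultiIndex => T.sup ⇑α) (s := u) hα)
  -- the injection into the pi set
  set emb : MultiIndex → (∀ n ∈ T, ℕ) := fun α => fun n _ => α n with hemb
  have hinj : Set.InjOn emb u := by
    intro α hα β hβ h
    ext n
    by_cases hn : n ∈ T
    · exact congrFun (congrFun h n) hn
    · have h1 : α n = 0 := Finsupp.notMem_support_iff.1 fun hc => hn (hsupp α hα hc)
      have h2 : β n = 0 := Finsupp.notMem_support_iff.1 fun hc => hn (hsupp β hβ hc)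
      rw [h1, h2]
  have step1 : ∑ α ∈ u, wt (-p) α =
      ∑ q ∈ u.image emb, ∏ x ∈ T.attach, f x.1 ^ q x.1 x.2 := by
    rw [Finset.sum_image fun α hα β hβ h => hinj hα hβ h]
    refine Finset.sum_congr rfl fun α hα => ?_
    rw [hwt α T (hsupp α hα), ← Finset.prod_attach T fun n => f n ^ α n]
  have hsub : u.image emb ⊆ T.pi fun _ => Finset.range (M + 1) := by
    intro q hq
    obtain ⟨α, hα, rfl⟩ := Finset.mem_image.1 hq
    rw [Finset.mem_pi]
    intro n hn
    rw [Finset.mem_range]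
    exact Nat.lt_succ_of_le (hval α hα n hn)
  have step2 : ∑ q ∈ u.image emb, ∏ x ∈ T.attach, f x.1 ^ q x.1 x.2 ≤
      ∑ q ∈ T.pi fun _ => Finset.range (M + 1), ∏ x ∈ T.attach, f x.1 ^ q x.1 x.2 :=
    Finset.sum_le_sum_of_subset_of_nonneg hsub fun q _ _ =>
      Finset.prod_nonneg fun x _ => pow_nonneg (hfpos x.1).le _
  have step3 : ∑ q ∈ T.pi fun _ => Finset.range (M + 1), ∏ x ∈ T.attach, f x.1 ^ q x.1 x.2 =
      ∏ n ∈ T, ∑ k ∈ Finset.range (M + 1), f n ^ k :=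
    (Finset.prod_sum T (fun _ => Finset.range (M + 1)) fun n k => f n ^ k).symm
  have step4 : ∏ n ∈ T, ∑ k ∈ Finset.range (M + 1), f n ^ k ≤
      ∏ n ∈ T, Real.exp (2 * f n) := by
    apply Finset.prod_le_prod
    · intro n _
      exact Finset.sum_nonneg fun k _ => pow_nonneg (hfpos n).le _
    · intro n _
      have hgeom : ∑ k ∈ Finset.range (M + 1), f n ^ k ≤ (1 - f n)⁻¹ := by
        have hsg : Summable (fun k : ℕ => f n ^ k) :=
          summable_geometric_of_lt_one (hfpos n).le (hflt1 n)
        calc ∑ k ∈ Finset.range (M + 1), f n ^ k ≤ ∑' k : ℕ, f n ^ k :=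
              Summable.sum_le_tsum _ (fun k _ => pow_nonneg (hfpos n).le _) hsg
          _ = (1 - f n)⁻¹ := tsum_geometric_of_lt_one (hfpos n).le (hflt1 n)
      have hlin : (1 - f n)⁻¹ ≤ 1 + 2 * f n := by
        rw [inv_le_iff_one_le_mul₀ (by linarith [hfhalf n])]
        nlinarith [hfpos n, hfhalf n]
      have hexp : 1 + 2 * f n ≤ Real.exp (2 * f n) := by
        have := Real.add_one_le_exp (2 * f n)
        linarith
      linarith
  have step5 : ∏ n ∈ T, Real.exp (2 * f n) ≤ Real.exp (2 * C) := by
    rw [← Real.exp_sum]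
    apply Real.exp_le_exp.2
    rw [← Finset.mul_sum]
    have : ∑ n ∈ T, f n ≤ C := Summable.sum_le_tsum T (fun n _ => (hfpos n).le) hsumf
    linarith
  calc ∑ α ∈ u, wt (-p) α
      = ∑ q ∈ u.image emb, ∏ x ∈ T.attach, f x.1 ^ q x.1 x.2 := step1
    _ ≤ ∑ q ∈ T.pi fun _ => Finset.range (M + 1), ∏ x ∈ T.attach, f x.1 ^ q x.1 x.2 := step2
    _ = ∏ n ∈ T, ∑ k ∈ Finset.range (M + 1), f n ^ k := step3
    _ ≤ ∏ n ∈ T, Real.exp (2 * f n) := step4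
    _ ≤ Real.exp (2 * C) := step5
end

section
/- Let r, s be natural numbers with s ≥ r ≥ 2 and let p, q be real numbers with p ≥ 0 and q > p + 1. Then the family α ↦ ((r^{|α|³})! / (s^{|α|³})!) · (2ℕ)^{−(q−p)α} is summable over 𝓘; moreover every term satisfies (r^{|α|³})! / (s^{|α|³})! ≤ 1, so the sum is at most ∑_{α∈𝓘} (2ℕ)^{−(q−p)α} < ∞. (This is the Hilbert–Schmidt estimate showing the embedding (FS)_{s,q} ⊂ (FS)_{r,p} is Hilbert–Schmidt, hence that the space (FS) is nuclear.) -/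
lemma sum_finsupp_eq (x : ℕ → ℝ) (s : Finset ℕ) (t : ℕ → Finset ℕ) :
    ∑ α ∈ s.finsupp t, (α.prod fun n k => x n ^ k) = ∏ n ∈ s, ∑ k ∈ t n, x n ^ k := by
  classical
  rw [Finset.finsupp, Finset.sum_map, Finset.prod_sum]
  refine Finset.sum_congr (by congr!) fun g hg => ?_
  rw [Function.Embedding.coeFn_mk,
    Finsupp.prod_of_support_subset _ (Finsupp.support_indicator_subset s g) _
      (fun i _ => pow_zero (x i)), ← Finset.prod_attach s (fun n => x n ^ (Finsupp.indicator s g n))]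
  exact Finset.prod_congr rfl fun a _ => by rw [Finsupp.indicator_of_mem a.2]

lemma summable_prod_pow (x : ℕ → ℝ) (hx0 : ∀ n, 0 ≤ x n) (hxh : ∀ n, x n ≤ 1 / 2)
    (hsum : Summable x) :
    Summable (fun α : MultiIndex => α.prod fun n k => x n ^ k) := by
  apply summable_of_sum_le (c := Real.exp (2 * ∑' n, x n))
  · intro α
    exact Finset.prod_nonneg fun i _ => pow_nonneg (hx0 i) _
  · intro u
    set s : Finset ℕ := u.sup Finsupp.support with hs
    set t : ℕ → Finset ℕ := fun n => Finset.range ((u.sup fun α => α n) + 1) with ht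
    have hsub : u ⊆ s.finsupp t := by
      intro α hα
      rw [Finset.mem_finsupp_iff]
      refine ⟨Finset.le_sup (f := Finsupp.support) hα, fun i _ => ?_⟩
      exact Finset.mem_range.2 (Nat.lt_succ_of_le (Finset.le_sup (f := fun α => α i) hα))
    have h1 : ∑ α ∈ u, (α.prod fun n k => x n ^ k) ≤
        ∑ α ∈ s.finsupp t, (α.prod fun n k => x n ^ k) := by
      apply Finset.sum_le_sum_of_subset_of_nonneg hsub
      intro α _ _
      exact Finset.prod_nonneg fun i _ => pow_nonneg (hx0 i) _
    rw [sum_finsupp_eq] at h1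
    have h2 : ∀ n ∈ s, ∑ k ∈ t n, x n ^ k ≤ Real.exp (2 * x n) := by
      intro n _
      have hg : (∑ k ∈ t n, x n ^ k) * (x n - 1) = x n ^ ((u.sup fun α => α n) + 1) - 1 :=
        geom_sum_mul (x n) _
      have hpm : (0:ℝ) ≤ x n ^ ((u.sup fun α => α n) + 1) := pow_nonneg (hx0 n) _
      have hle : ∑ k ∈ t n, x n ^ k ≤ 1 + 2 * x n := by
        nlinarith [hx0 n, hxh n]
      have : 2 * x n + 1 ≤ Real.exp (2 * x n) := Real.add_one_le_exp _
      linarith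
    calc ∑ α ∈ u, (α.prod fun n k => x n ^ k) ≤ ∏ n ∈ s, ∑ k ∈ t n, x n ^ k := h1
      _ ≤ ∏ n ∈ s, Real.exp (2 * x n) := by
          apply Finset.prod_le_prod _ h2
          intro n _
          exact Finset.sum_nonneg fun k _ => pow_nonneg (hx0 n) _
      _ = Real.exp (∑ n ∈ s, 2 * x n) := (Real.exp_sum s _).symm
      _ ≤ Real.exp (2 * ∑' n, x n) := by
          apply Real.exp_le_exp.2
          rw [← Finset.mul_sum]
          have := Summable.sum_le_tsum s (fun i _ => hx0 i) hsum
          linarith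

theorem stmt_3 (r s : ℕ) (hr : 2 ≤ r) (hs : r ≤ s) (p q : ℝ) (hp : 0 ≤ p)
    (hq : p + 1 < q) :
    Summable (fun α : MultiIndex =>
      ((r ^ (msize α) ^ 3).factorial : ℝ) / ((s ^ (msize α) ^ 3).factorial : ℝ) *
        wt (-(q - p)) α) ∧
    (∀ α : MultiIndex,
      ((r ^ (msize α) ^ 3).factorial : ℝ) / ((s ^ (msize α) ^ 3).factorial : ℝ) ≤ 1) ∧
    Summable (fun α : MultiIndex => wt (-(q - p)) α) ∧
    (∑' α : MultiIndex,
        ((r ^ (msize α) ^ 3).factorial : ℝ) / ((s ^ (msize α) ^ 3).factorial : ℝ) *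
          wt (-(q - p)) α) ≤
      ∑' α : MultiIndex, wt (-(q - p)) α := by
  have hc : 1 < q - p := by linarith
  set c : ℝ := q - p with hcdef
  set x : ℕ → ℝ := fun n => (2 * ((n : ℝ) + 1)) ^ (-c) with hx
  have hb : ∀ n : ℕ, (0:ℝ) < 2 * ((n : ℝ) + 1) := by
    intro n; positivity
  have hx0 : ∀ n, 0 ≤ x n := fun n => Real.rpow_nonneg (hb n).le _
  have hxh : ∀ n, x n ≤ 1 / 2 := by
    intro n
    have h1 : x n ≤ (2:ℝ) ^ (-c) := by
      apply Real.rpow_le_rpow_of_nonpos (by norm_num : (0:ℝ) < 2) _ (by linarith)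
      have : (0:ℝ) ≤ (n:ℝ) := Nat.cast_nonneg n
      linarith
    have h2 : (2:ℝ) ^ (-c) ≤ (2:ℝ) ^ (-1:ℝ) :=
      Real.rpow_le_rpow_of_exponent_le (by norm_num : (1:ℝ) ≤ 2) (by linarith)
    have h3 : (2:ℝ) ^ (-1:ℝ) = 1/2 := by
      rw [Real.rpow_neg_one]; norm_num
    exact h1.trans (h2.trans h3.le)
  have hxs : Summable x := by
    have hbig : Summable (fun n : ℕ => ((n + 1 : ℕ) : ℝ) ^ (-c)) := by
      have := Real.summable_nat_rpow (p := -c) |>.2 (by linarith)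
      exact (summable_nat_add_iff 1).2 this
    apply Summable.of_nonneg_of_le hx0 _ hbig
    intro n
    apply Real.rpow_le_rpow_of_nonpos _ _ (by linarith)
    · positivity
    · have : (0:ℝ) ≤ (n:ℝ) := Nat.cast_nonneg n
      push_cast; linarith
  have hwt : ∀ α : MultiIndex, wt (-c) α = α.prod fun n k => x n ^ k := by
    intro α
    refine Finset.prod_congr rfl fun n _ => ?_
    show (2 * ((n:ℝ) + 1)) ^ (-c * ((α n : ℕ) : ℝ)) = ((2 * ((n:ℝ) + 1)) ^ (-c)) ^ (α n)
    rw [Real.rpow_mul (hb n).le, Real.rpow_natCast]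
  have hwt0 : ∀ α : MultiIndex, 0 ≤ wt (-c) α := by
    intro α
    rw [hwt]
    exact Finset.prod_nonneg fun i _ => pow_nonneg (hx0 i) _
  have hS : Summable (fun α : MultiIndex => wt (-c) α) := by
    simp_rw [hwt]
    exact summable_prod_pow x hx0 hxh hxs
  have hratio : ∀ α : MultiIndex,
      ((r ^ (msize α) ^ 3).factorial : ℝ) / ((s ^ (msize α) ^ 3).factorial : ℝ) ≤ 1 := by
    intro α
    rw [div_le_one (by positivity)]
    exact_mod_cast Nat.factorial_le (Nat.pow_le_pow_left hs _)
  have hratio0 : ∀ α : MultiIndex,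
      (0:ℝ) ≤ ((r ^ (msize α) ^ 3).factorial : ℝ) / ((s ^ (msize α) ^ 3).factorial : ℝ) := by
    intro α; positivity
  have hle : ∀ α : MultiIndex,
      ((r ^ (msize α) ^ 3).factorial : ℝ) / ((s ^ (msize α) ^ 3).factorial : ℝ) * wt (-c) α ≤
        wt (-c) α := fun α => mul_le_of_le_one_left (hwt0 α) (hratio α)
  have hS1 : Summable (fun α : MultiIndex =>
      ((r ^ (msize α) ^ 3).factorial : ℝ) / ((s ^ (msize α) ^ 3).factorial : ℝ) *
        wt (-c) α) := by
    apply Summable.of_nonneg_of_le _ hle hS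
    intro α
    exact mul_nonneg (hratio0 α) (hwt0 α)
  exact ⟨hS1, hratio, hS, Summable.tsum_le_tsum hle hS1 hS⟩
end

section
/- Let X be a normed ring, let r be a natural number with r ≥ 2 and p ≥ 0 a real number, and let f, g : 𝓘 → X satisfy A := ‖f‖²_{−r,−p} < ∞ and B := ‖g‖²_{−r,−p} < ∞. Let k > 1 be real, set q = p − 1 + k, and let s be a natural number with s ≥ r. Then the Wick product f ◊ g satisfies ∑_{γ∈𝓘} γ! · ‖(f ◊ g)_γ‖² · ((s^{|γ|³})!)^{−1} · (2ℕ)^{−qγ} ≤ M · A · B, where M = ∑_{γ∈𝓘} (2ℕ)^{−kγ} < ∞; in particular ‖f ◊ g‖²_{−s,−q} is finite. -/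
/-- The Wick product: `(f ◊ g)_γ = ∑_{β ≤ γ} f_β · g_{γ-β}`. -/
noncomputable def wick {X : Type*} [NormedRing X] (f g : MultiIndex → X) :
    MultiIndex → X :=
  fun γ => ∑ p ∈ Finset.HasAntidiagonal.antidiagonal γ, f p.1 * g p.2

/-- The summand of the squared `(FS)_{-r,-p}`-norm:
`α! · ‖f_α‖² · ((r^{|α|³})!)⁻¹ · (2ℕ)^{-pα}`. -/
noncomputable def fsTerm {X : Type*} [NormedRing X] (r : ℕ) (p : ℝ)
    (f : MultiIndex → X) (α : MultiIndex) : ℝ :=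
  (mfact α : ℝ) * ‖f α‖ ^ 2 * ((r ^ (msize α) ^ 3).factorial : ℝ)⁻¹ * wt (-p) α


/-!
Bound `‖(f ◊ g)_γ‖` by `∑_{β+δ=γ} ‖f_β‖ ‖g_δ‖` and apply Cauchy–Schwarz with weights chosen so
that the second factor is `∑_{β+δ=γ}` of the products of the `(FS)_{-r,-p}`-summands of `f` at `β`
and of `g` at `δ`; summed over `γ`, this is the Cauchy product `A · B`. It remains to bound the
sum of the weights over `β + δ = γ` uniformly by `M`. The two terms with `β = 0` or `δ = 0` are at
most `2^{1-k}` each. For `β, δ ≠ 0` the factorial `(s^{|γ|³})!` beats `(r^{|β|³})! (r^{|δ|³})!`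
by a further factor `(8^{|γ|})!`, which absorbs both `γ!/(β! δ!) ≤ 2^{|γ|}` and the number
`≤ 2^{|γ|}` of such terms. Finally `M ≥ (1 - 2^{-k})⁻¹ (1 - 4^{-k})⁻¹ ≥ 2 · 2^{1-k} + 1/14`,
the first bound coming from the multi-indices supported on the first two positions.
-/

open Finset Finset.HasAntidiagonal
open scoped Nat

lemma wt_eq_prod_pow (c : ℝ) (α : MultiIndex) :
    wt c α = α.prod fun n m => ((2 * ((n : ℝ) + 1)) ^ c) ^ m := by
  refine prod_congr rfl fun n _ => ?_
  dsimp only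
  rw [← Real.rpow_natCast _ (α n), ← Real.rpow_mul (by positivity)]

lemma wt_pos (c : ℝ) (α : MultiIndex) : 0 < wt c α :=
  prod_pos fun _ _ => Real.rpow_pos_of_pos (by positivity) _

@[simp]
lemma wt_zero (c : ℝ) : wt c 0 = 1 := Finsupp.prod_zero_index

lemma wt_add (c : ℝ) (α β : MultiIndex) : wt c (α + β) = wt c α * wt c β :=
  Finsupp.prod_add_index' (fun _ => by simp) fun n a b => by
    rw [Nat.cast_add, mul_add c, Real.rpow_add (by positivity)]

lemma wt_exponent_add (c d : ℝ) (α : MultiIndex) : wt (c + d) α = wt c α * wt d α := by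
  simp only [wt_eq_prod_pow, ← Finsupp.prod_mul, ← mul_pow]
  congr! 2 with n m
  rw [Real.rpow_add (by positivity)]

lemma wt_single (c : ℝ) (n m : ℕ) :
    wt c (Finsupp.single n m) = ((2 * ((n : ℝ) + 1)) ^ c) ^ m := by
  rw [wt_eq_prod_pow]
  exact Finsupp.prod_single_index (pow_zero _)

lemma msize_eq_degree (α : MultiIndex) : msize α = α.degree := rfl

lemma msize_add (α β : MultiIndex) : msize (α + β) = msize α + msize β :=
  Finsupp.degree.map_add α β

lemma msize_eq_zero_iff {α : MultiIndex} : msize α = 0 ↔ α = 0 := Finsupp.degree_eq_zero_iff α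

lemma wt_le_pow_msize {c : ℝ} (hc : c ≤ 0) (α : MultiIndex) :
    wt c α ≤ ((2 : ℝ) ^ c) ^ msize α := by
  rw [wt_eq_prod_pow, msize_eq_degree, Finsupp.degree_apply, ← prod_pow_eq_pow_sum]
  refine prod_le_prod (fun _ _ => by positivity) fun n _ => pow_le_pow_left₀ (by positivity) ?_ _
  exact Real.rpow_le_rpow_of_nonpos two_pos (by linarith [n.cast_nonneg (α := ℝ)]) hc

lemma mfact_pos (α : MultiIndex) : 0 < mfact α := prod_pos fun _ _ => Nat.factorial_pos _

@[simp]
lemma mfact_zero : mfact 0 = 1 := Finsupp.prod_zero_index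

lemma add_factorial_le (a b : ℕ) : (a + b)! ≤ 2 ^ (a + b) * (a ! * b !) := by
  rw [← Nat.add_choose_mul_factorial_mul_factorial a b, mul_assoc]
  exact Nat.mul_le_mul_right _ (Nat.choose_le_two_pow _ _)

lemma mfact_add_le (β δ : MultiIndex) :
    mfact (β + δ) ≤ 2 ^ msize (β + δ) * (mfact β * mfact δ) := by
  classical
  set S := (β + δ).support
  have hβ : β.support ⊆ S := fun n hn => by simp_all [S]
  have hδ : δ.support ⊆ S := fun n hn => by simp_all [S]
  have hprod {η : MultiIndex} (h : η.support ⊆ S) : mfact η = ∏ n ∈ S, (η n)! :=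
    Finsupp.prod_of_support_subset η h (fun _ k => k !) fun _ _ => rfl
  rw [hprod hβ, hprod hδ, hprod subset_rfl, msize_eq_degree, Finsupp.degree_apply,
    ← prod_pow_eq_pow_sum, ← prod_mul_distrib, ← prod_mul_distrib]
  exact prod_le_prod' fun n _ => add_factorial_le (β n) (δ n)

lemma card_antidiagonal_le (γ : MultiIndex) : #(antidiagonal γ) ≤ 2 ^ msize γ := by
  calc #(antidiagonal γ) ≤ #(Iic γ) :=
        card_le_card_of_injOn Prod.fst (fun z hz => mem_Iic.2 (antidiagonal.fst_le hz))
          fun z hz w hw h => Prod.ext h <| add_left_cancel <|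
            (mem_antidiagonal.1 hz).trans ((mem_antidiagonal.1 hw).symm.trans (by rw [h]))
    _ = ∏ n ∈ γ.support, (γ n + 1) := by
        rw [Finsupp.card_Iic]; exact prod_congr rfl fun n _ => Nat.card_Iic _
    _ ≤ ∏ n ∈ γ.support, 2 ^ γ n := prod_le_prod' fun n _ => Nat.lt_two_pow_self
    _ = 2 ^ msize γ := by rw [prod_pow_eq_pow_sum]; rfl

lemma factorial_mul_factorial_mul_factorial_le (x y z : ℕ) : x ! * y ! * z ! ≤ (x + y + z)! :=
  (Nat.mul_le_mul_right _ (Nat.le_of_dvd (Nat.factorial_pos _)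
    (Nat.factorial_mul_factorial_dvd_factorial_add x y))).trans
    (Nat.le_of_dvd (Nat.factorial_pos _) (Nat.factorial_mul_factorial_dvd_factorial_add _ z))

/-- Since `(a + b)³ = a³ + b³ + 3ab(a + b)`, the room between `r^{a³} + r^{b³}` and `s^{(a+b)³}`
leaves space for a third block of size `8^{a+b}`. -/
lemma factorial_pow_cube_mul_le {a b r s : ℕ} (ha : a ≠ 0) (hb : b ≠ 0) (hr : 2 ≤ r)
    (hrs : r ≤ s) :
    (r ^ a ^ 3)! * (r ^ b ^ 3)! * (8 ^ (a + b))! ≤ (s ^ (a + b) ^ 3)! := by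
  have two_le_pow {m : ℕ} (hm : m ≠ 0) : 2 ≤ r ^ m :=
    hr.trans (Nat.le_self_pow hm r)
  have h8 : 8 ^ (a + b) ≤ r ^ (3 * a * b * (a + b)) := calc
    8 ^ (a + b) = 2 ^ (3 * (a + b)) := by rw [pow_mul]; norm_num
    _ ≤ r ^ (3 * (a + b)) := Nat.pow_le_pow_left hr _
    _ ≤ r ^ (3 * a * b * (a + b)) := Nat.pow_le_pow_right (by omega) <| by
        have : 1 ≤ a * b := Nat.one_le_iff_ne_zero.2 (mul_ne_zero ha hb)
        nlinarith
  have hx := two_le_pow (pow_ne_zero 3 ha)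
  have hy := two_le_pow (pow_ne_zero 3 hb)
  have hsum : r ^ a ^ 3 + r ^ b ^ 3 + 8 ^ (a + b) ≤ s ^ (a + b) ^ 3 := calc
    _ ≤ r ^ a ^ 3 * r ^ b ^ 3 + r ^ (3 * a * b * (a + b)) :=
        add_le_add (Nat.add_le_mul hx hy) h8
    _ ≤ r ^ a ^ 3 * r ^ b ^ 3 * r ^ (3 * a * b * (a + b)) :=
        Nat.add_le_mul (hx.trans (Nat.le_mul_of_pos_right _ (by omega)))
          (two_le_pow (by positivity))
    _ = r ^ (a + b) ^ 3 := by rw [← pow_add, ← pow_add]; ring_nf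
    _ ≤ s ^ (a + b) ^ 3 := Nat.pow_le_pow_left hrs _
  exact (factorial_mul_factorial_mul_factorial_le _ _ _).trans (Nat.factorial_le hsum)

lemma seven_mul_le_factorial {m : ℕ} (hm : 8 ≤ m) : 7 * m ≤ m ! := by
  rw [← Nat.mul_factorial_pred (by omega), mul_comm 7]
  exact Nat.mul_le_mul_left _ ((by omega : 7 ≤ m - 1).trans (Nat.self_le_factorial _))

lemma inv_one_sub_le_exp_two_mul {x : ℝ} (hx0 : 0 ≤ x) (hx : x ≤ 1 / 2) :
    (1 - x)⁻¹ ≤ Real.exp (2 * x) := by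
  refine le_trans ?_ (by linarith [Real.add_one_le_exp (2 * x)] : 1 + 2 * x ≤ _)
  rw [inv_le_iff_one_le_mul₀ (by linarith)]
  nlinarith

/-- Every partial sum is dominated by a partial Euler-type product `∏ᵢ (1 - xᵢ)⁻¹`,
and `(1 - x)⁻¹ ≤ exp (2x)` bounds these products by `exp (2 ∑ xᵢ)`. -/
theorem summable_finsupp_prod_pow {ι : Type*} {x : ι → ℝ} (hx0 : ∀ i, 0 ≤ x i)
    (hx1 : ∀ i, x i ≤ 1 / 2) (hx : Summable x) :
    Summable fun α : ι →₀ ℕ => α.prod fun i m => x i ^ m := by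
  classical
  refine summable_of_sum_le (c := Real.exp (2 * ∑' i, x i))
    (fun α => prod_nonneg fun i _ => pow_nonneg (hx0 i) _) fun U => ?_
  set S := U.biUnion Finsupp.support
  set K := U.sup fun α => S.sup α
  have hS {α} (hα : α ∈ U) : α.support ⊆ S := subset_biUnion_of_mem _ hα
  let res : (ι →₀ ℕ) → S → ℕ := fun α i => α i
  have hres : Set.InjOn res U := fun α hα β hβ h => Finsupp.ext fun i => by
    by_cases hi : i ∈ S
    · exact congrFun h ⟨i, hi⟩
    · rw [Finsupp.notMem_support_iff.1 fun h => hi (hS hα h),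
        Finsupp.notMem_support_iff.1 fun h => hi (hS hβ h)]
  have hprod {α} (hα : α ∈ U) : (α.prod fun i m => x i ^ m) = ∏ i : S, x i ^ res α i := by
    rw [Finsupp.prod_of_support_subset α (hS hα) _ fun _ _ => pow_zero _, ← prod_coe_sort]
  have hresU : U.image res ⊆ Fintype.piFinset fun _ => range (K + 1) := by
    simp only [subset_iff, mem_image, Fintype.mem_piFinset, mem_range, Nat.lt_succ_iff]
    rintro _ ⟨α, hα, rfl⟩ i
    exact (le_sup (f := α) i.2).trans (le_sup (f := fun α : ι →₀ ℕ => S.sup α) hα)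
  have hgeom (i : ι) : ∑ m ∈ range (K + 1), x i ^ m ≤ (1 - x i)⁻¹ := by
    have := geom_sum_Ico_le_of_lt_one (m := 0) (n := K + 1) (hx0 i) (by linarith [hx1 i])
    rwa [← range_eq_Ico, pow_zero, one_div] at this
  calc ∑ α ∈ U, α.prod (fun i m => x i ^ m)
      = ∑ y ∈ U.image res, ∏ i : S, x i ^ y i := by
        rw [sum_image hres]; exact sum_congr rfl fun α hα => hprod hα
    _ ≤ ∑ y ∈ Fintype.piFinset fun _ => range (K + 1), ∏ i : S, x i ^ y i :=
        sum_le_sum_of_subset_of_nonneg hresU fun _ _ _ =>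
          prod_nonneg fun i _ => pow_nonneg (hx0 i) _
    _ = ∏ i : S, ∑ m ∈ range (K + 1), x i ^ m := sum_prod_piFinset _ _
    _ ≤ ∏ i : S, Real.exp (2 * x i) := prod_le_prod
        (fun i _ => sum_nonneg fun m _ => pow_nonneg (hx0 i) m) fun i _ =>
          (hgeom i).trans (inv_one_sub_le_exp_two_mul (hx0 i) (hx1 i))
    _ = Real.exp (2 * ∑ i ∈ S, x i) := by
        rw [mul_sum, Real.exp_sum, prod_coe_sort S fun i => Real.exp (2 * x i)]
    _ ≤ Real.exp (2 * ∑' i, x i) := by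
        gcongr; exact hx.sum_le_tsum S fun i _ => hx0 i

lemma rpow_neg_le_half {k : ℝ} (hk : 1 ≤ k) {b : ℝ} (hb : 2 ≤ b) : b ^ (-k) ≤ 1 / 2 := calc
  b ^ (-k) ≤ 2 ^ (-k) := Real.rpow_le_rpow_of_nonpos two_pos hb (by linarith)
  _ ≤ 2 ^ (-1 : ℝ) := Real.rpow_le_rpow_of_exponent_le one_le_two (by linarith)
  _ = 1 / 2 := by rw [Real.rpow_neg_one, one_div]

theorem summable_wt {k : ℝ} (hk : 1 < k) : Summable (wt (-k)) := by
  have hshift : Summable fun n : ℕ => ((n : ℝ) + 1) ^ (-k) := by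
    simpa using (summable_nat_add_iff 1).2 (Real.summable_nat_rpow.2 (by linarith : -k < -1))
  have hx : Summable fun n : ℕ => (2 * ((n : ℝ) + 1)) ^ (-k) :=
    (hshift.mul_left (2 ^ (-k))).congr fun n => (Real.mul_rpow two_pos.le (by positivity)).symm
  simpa only [funext (wt_eq_prod_pow (-k))] using summable_finsupp_prod_pow
    (fun n => by positivity)
    (fun n => rpow_neg_le_half hk.le (by linarith [n.cast_nonneg (α := ℝ)])) hx

lemma inv_mul_inv_le_tsum_wt {k : ℝ} (hk : 1 < k) :
    (1 - 2 ^ (-k))⁻¹ * (1 - (2 ^ (-k)) ^ 2)⁻¹ ≤ ∑' γ, wt (-k) γ := by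
  set t : ℝ := 2 ^ (-k)
  have ht0 : 0 ≤ t := by positivity
  have ht1 : t < 1 := (rpow_neg_le_half hk.le le_rfl).trans_lt (by norm_num)
  have ht21 : t ^ 2 < 1 := by nlinarith
  have hg1 := summable_geometric_of_lt_one ht0 ht1
  have hg2 := summable_geometric_of_lt_one (by positivity) ht21
  have hpair := hg1.mul_of_nonneg hg2 (fun a => by positivity) (fun b => by positivity)
  have hemb : Function.Injective fun z : ℕ × ℕ => Finsupp.single 0 z.1 + Finsupp.single 1 z.2 :=
    fun z w h => Prod.ext (by simpa using DFunLike.congr_fun h 0)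
      (by simpa using DFunLike.congr_fun h 1)
  have hwt (z : ℕ × ℕ) : wt (-k) (Finsupp.single 0 z.1 + Finsupp.single 1 z.2) =
      t ^ z.1 * (t ^ 2) ^ z.2 := by
    have h4 : (2 * (((1 : ℕ) : ℝ) + 1)) ^ (-k) = t ^ 2 := by
      rw [sq, ← Real.mul_rpow (by norm_num) (by norm_num)]
      norm_num
    rw [wt_add, wt_single, wt_single, h4]
    norm_num [t]
  calc (1 - t)⁻¹ * (1 - t ^ 2)⁻¹
      = (∑' a : ℕ, t ^ a) * ∑' b : ℕ, (t ^ 2) ^ b := by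
        rw [tsum_geometric_of_lt_one ht0 ht1, tsum_geometric_of_lt_one (by positivity) ht21]
    _ = ∑' z : ℕ × ℕ, t ^ z.1 * (t ^ 2) ^ z.2 := hg1.tsum_mul_tsum hg2 hpair
    _ ≤ ∑' γ, wt (-k) γ := hpair.tsum_le_tsum_of_inj _ hemb (fun γ _ => (wt_pos _ γ).le)
          (fun z => (hwt z).ge) (summable_wt hk)

lemma four_mul_add_le_inv_mul_inv {t : ℝ} (h0 : 0 ≤ t) (h1 : t ≤ 1 / 2) :
    4 * t + 1 / 14 ≤ (1 - t)⁻¹ * (1 - t ^ 2)⁻¹ := by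
  rw [← mul_inv, ← one_div, le_div_iff₀ (by nlinarith)]
  nlinarith [mul_nonneg h0 (sub_nonneg.2 h1), mul_nonneg (mul_nonneg h0 h0) (sub_nonneg.2 h1),
    mul_nonneg (mul_nonneg h0 h0) h0]

lemma two_mul_two_rpow_add_le_tsum_wt {k : ℝ} (hk : 1 < k) :
    2 * 2 ^ (1 - k) + 1 / 14 ≤ ∑' γ, wt (-k) γ := by
  have h2 : (2 : ℝ) ^ (1 - k) = 2 * 2 ^ (-k) := by
    rw [sub_eq_add_neg, Real.rpow_add two_pos, Real.rpow_one]
  rw [h2, ← mul_assoc]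
  norm_num only
  exact (four_mul_add_le_inv_mul_inv (by positivity) (rpow_neg_le_half hk.le le_rfl)).trans
    (inv_mul_inv_le_tsum_wt hk)

def fsFact (r : ℕ) (α : MultiIndex) : ℕ := (r ^ msize α ^ 3)!

noncomputable def fsWeight (r : ℕ) (p : ℝ) (α : MultiIndex) : ℝ :=
  mfact α / fsFact r α * wt (-p) α

lemma fsTerm_eq_fsWeight_mul {X : Type*} [NormedRing X] (r : ℕ) (p : ℝ) (f : MultiIndex → X)
    (α : MultiIndex) : fsTerm r p f α = fsWeight r p α * ‖f α‖ ^ 2 := by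
  unfold fsTerm fsWeight fsFact
  ring

lemma fsFact_pos (r : ℕ) (α : MultiIndex) : 0 < fsFact r α := Nat.factorial_pos _

@[simp]
lemma fsFact_zero (r : ℕ) : fsFact r 0 = 1 := by
  simp [fsFact, msize_eq_degree]

lemma fsWeight_pos (r : ℕ) (p : ℝ) (α : MultiIndex) : 0 < fsWeight r p α := by
  have := mfact_pos α
  have := fsFact_pos r α
  have := wt_pos (-p) α
  unfold fsWeight
  positivity

lemma fsTerm_nonneg {X : Type*} [NormedRing X] (r : ℕ) (p : ℝ) (f : MultiIndex → X)
    (α : MultiIndex) : 0 ≤ fsTerm r p f α := by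
  rw [fsTerm_eq_fsWeight_mul]
  exact mul_nonneg (fsWeight_pos r p α).le (sq_nonneg _)

noncomputable def wickWeight (r s : ℕ) (p k : ℝ) (β δ : MultiIndex) : ℝ :=
  fsWeight s (p - 1 + k) (β + δ) / (fsWeight r p β * fsWeight r p δ)

lemma wickWeight_eq (r s : ℕ) (p k : ℝ) (β δ : MultiIndex) :
    wickWeight r s p k β δ = mfact (β + δ) / (mfact β * mfact δ) *
      ((fsFact r β * fsFact r δ : ℕ) / fsFact s (β + δ)) * wt (1 - k) (β + δ) := by
  have := mfact_pos β
  have := mfact_pos δ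
  have := fsFact_pos r β
  have := fsFact_pos r δ
  have := wt_pos (-p) β
  have := wt_pos (-p) δ
  rw [wickWeight, fsWeight, fsWeight, fsWeight, show -(p - 1 + k) = -p + (1 - k) by ring,
    wt_exponent_add, wt_add]
  field_simp
  push_cast
  ring

lemma wickWeight_comm (r s : ℕ) (p k : ℝ) (β δ : MultiIndex) :
    wickWeight r s p k β δ = wickWeight r s p k δ β := by
  rw [wickWeight, wickWeight, add_comm β δ, mul_comm (fsWeight r p β)]

lemma wickWeight_zero_left {r s : ℕ} (hrs : r ≤ s) (p k : ℝ) (γ : MultiIndex) :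
    wickWeight r s p k 0 γ ≤ wt (1 - k) γ := by
  have hγ : (0 : ℝ) < mfact γ := by exact_mod_cast mfact_pos γ
  have hfact : (fsFact r γ : ℝ) ≤ fsFact s γ := by
    exact_mod_cast Nat.factorial_le (Nat.pow_le_pow_left hrs _)
  rw [wickWeight_eq, zero_add, mfact_zero, fsFact_zero, Nat.cast_one, one_mul, one_mul,
    div_self hγ.ne', one_mul]
  exact mul_le_of_le_one_left (wt_pos _ γ).le
    ((div_le_one (by exact_mod_cast fsFact_pos s γ)).2 (by exact_mod_cast hfact))

lemma wickWeight_le_of_ne_zero {r s : ℕ} (hr : 2 ≤ r) (hrs : r ≤ s) (p : ℝ) {k : ℝ}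
    (hk : 1 ≤ k) {β δ : MultiIndex} (hβ : β ≠ 0) (hδ : δ ≠ 0) :
    wickWeight r s p k β δ ≤ 2 ^ msize (β + δ) / ((8 ^ msize (β + δ))! : ℕ) := by
  set n := msize (β + δ)
  have hmfact : (mfact (β + δ) : ℝ) / (mfact β * mfact δ) ≤ 2 ^ n := by
    rw [div_le_iff₀ (by exact_mod_cast mul_pos (mfact_pos β) (mfact_pos δ))]
    exact_mod_cast mfact_add_le β δ
  have hfact : ((fsFact r β * fsFact r δ : ℕ) : ℝ) / fsFact s (β + δ) ≤ 1 / ((8 ^ n)! : ℕ) := by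
    rw [div_le_div_iff₀ (by exact_mod_cast fsFact_pos s _) (by positivity), one_mul]
    have := factorial_pow_cube_mul_le (mt msize_eq_zero_iff.1 hβ) (mt msize_eq_zero_iff.1 hδ)
      hr hrs
    rw [← msize_add] at this
    exact_mod_cast this
  have hwt : wt (1 - k) (β + δ) ≤ 1 := (wt_le_pow_msize (by linarith) _).trans
    (pow_le_one₀ (by positivity) (Real.rpow_le_one_of_one_le_of_nonpos one_le_two (by linarith)))
  have := wt_pos (1 - k) (β + δ)
  rw [wickWeight_eq]
  calc _ ≤ (2 : ℝ) ^ n * (1 / ((8 ^ n)! : ℕ)) * 1 := by gcongr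
    _ = _ := by ring

lemma four_pow_div_factorial_le {n : ℕ} (hn : n ≠ 0) :
    (4 : ℝ) ^ n / ((8 ^ n)! : ℕ) ≤ 1 / 14 := by
  have h8 : 14 * 4 ^ n ≤ 7 * 8 ^ n := calc
    14 * 4 ^ n = 7 * (2 * 4 ^ n) := by ring
    _ ≤ 7 * (2 ^ n * 4 ^ n) := by gcongr; exact Nat.le_self_pow hn 2
    _ = 7 * 8 ^ n := by rw [← mul_pow]; norm_num
  have hfact := seven_mul_le_factorial (Nat.le_self_pow hn 8)
  rw [div_le_div_iff₀ (by positivity) (by norm_num), one_mul, mul_comm]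
  exact_mod_cast h8.trans hfact

lemma sum_wickWeight_le_of_ne_zero {r s : ℕ} (hr : 2 ≤ r) (hrs : r ≤ s) (p : ℝ) {k : ℝ}
    (hk : 1 ≤ k) {γ : MultiIndex} (hγ : γ ≠ 0) :
    ∑ z ∈ antidiagonal γ, wickWeight r s p k z.1 z.2 ≤
      2 * 2 ^ (1 - k) + 4 ^ msize γ / ((8 ^ msize γ)! : ℕ) := by
  classical
  set n := msize γ with hn_def
  have hend : wickWeight r s p k 0 γ ≤ 2 ^ (1 - k) :=
    (wickWeight_zero_left hrs p k γ).trans <| (wt_le_pow_msize (by linarith) γ).trans <|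
      pow_le_of_le_one (by positivity)
        (Real.rpow_le_one_of_one_le_of_nonpos one_le_two (by linarith))
        (mt msize_eq_zero_iff.1 hγ)
  set A := antidiagonal γ
  have h0 : ((0 : MultiIndex), γ) ∈ A := mem_antidiagonal.2 (zero_add γ)
  have h1 : (γ, (0 : MultiIndex)) ∈ A.erase (0, γ) :=
    mem_erase.2 ⟨fun h => hγ (congrArg Prod.fst h), mem_antidiagonal.2 (add_zero γ)⟩
  set B := (A.erase (0, γ)).erase (γ, 0)
  have hinner {z} (hz : z ∈ B) : wickWeight r s p k z.1 z.2 ≤ 2 ^ n / ((8 ^ n)! : ℕ) := by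
    obtain ⟨hz1, hz0, hz⟩ : z ≠ (γ, 0) ∧ z ≠ (0, γ) ∧ z ∈ A := by
      simpa only [B, mem_erase] using hz
    have hsum : z.1 + z.2 = γ := mem_antidiagonal.1 hz
    have hle := wickWeight_le_of_ne_zero hr hrs p hk
      (fun h => hz0 (Prod.ext h (by rw [← hsum, h, zero_add])))
      (fun h => hz1 (Prod.ext (by rw [← hsum, h, add_zero]) h))
    rwa [hsum, ← hn_def] at hle
  have hcard : (#B : ℝ) ≤ 2 ^ n := by
    exact_mod_cast ((card_le_card (erase_subset _ _)).trans
      (card_le_card (erase_subset _ _))).trans (card_antidiagonal_le γ)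
  have hB : ∑ z ∈ B, wickWeight r s p k z.1 z.2 ≤ 4 ^ n / ((8 ^ n)! : ℕ) := calc
    _ ≤ #B • ((2 : ℝ) ^ n / ((8 ^ n)! : ℕ)) := sum_le_card_nsmul _ _ _ fun z hz => hinner hz
    _ ≤ (2 : ℝ) ^ n * (2 ^ n / ((8 ^ n)! : ℕ)) := by rw [nsmul_eq_mul]; gcongr
    _ = (4 : ℝ) ^ n / ((8 ^ n)! : ℕ) := by rw [mul_div_assoc', ← mul_pow]; norm_num
  rw [← add_sum_erase _ _ h0, ← add_sum_erase _ _ h1, wickWeight_comm r s p k γ 0]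
  linarith

theorem sum_wickWeight_le {r s : ℕ} (hr : 2 ≤ r) (hrs : r ≤ s) (p : ℝ) {k : ℝ} (hk : 1 < k)
    (γ : MultiIndex) :
    ∑ z ∈ antidiagonal γ, wickWeight r s p k z.1 z.2 ≤ ∑' γ, wt (-k) γ := by
  rcases eq_or_ne γ 0 with rfl | hγ
  · rw [Finsupp.antidiagonal_zero, sum_singleton]
    calc wickWeight r s p k 0 0 ≤ wt (1 - k) 0 := wickWeight_zero_left hrs p k 0
      _ = wt (-k) 0 := by simp
      _ ≤ ∑' γ, wt (-k) γ := (summable_wt hk).le_tsum 0 fun γ _ => (wt_pos _ γ).le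
  · linarith [sum_wickWeight_le_of_ne_zero hr hrs p hk.le hγ,
      four_pow_div_factorial_le (mt msize_eq_zero_iff.1 hγ), two_mul_two_rpow_add_le_tsum_wt hk]

lemma mul_sq_sum_le_sum_div_mul_sum {ι : Type*} (S : Finset ι) {c : ℝ} (hc : 0 ≤ c)
    {u : ι → ℝ} (hu : ∀ i ∈ S, 0 < u i) (a : ι → ℝ) :
    c * (∑ i ∈ S, a i) ^ 2 ≤ (∑ i ∈ S, c / u i) * ∑ i ∈ S, u i * a i ^ 2 := by
  have hcs := sum_sq_le_sum_mul_sum_of_sq_le_mul S (r := a) (f := fun i => (u i)⁻¹)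
    (g := fun i => u i * a i ^ 2) (fun i hi => (inv_pos.2 (hu i hi)).le)
    (fun i hi => mul_nonneg (hu i hi).le (sq_nonneg _))
    (fun i hi => by rw [inv_mul_cancel_left₀ (hu i hi).ne'])
  simp only [div_eq_mul_inv, ← mul_sum, mul_assoc]
  exact mul_le_mul_of_nonneg_left hcs hc

lemma fsTerm_wick_le {X : Type*} [NormedRing X] (r s : ℕ) (p k : ℝ) (f g : MultiIndex → X)
    (γ : MultiIndex) :
    fsTerm s (p - 1 + k) (wick f g) γ ≤
      (∑ z ∈ antidiagonal γ, wickWeight r s p k z.1 z.2) *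
        ∑ z ∈ antidiagonal γ, fsTerm r p f z.1 * fsTerm r p g z.2 := by
  have hnorm : ‖wick f g γ‖ ≤ ∑ z ∈ antidiagonal γ, ‖f z.1‖ * ‖g z.2‖ :=
    (norm_sum_le _ _).trans (sum_le_sum fun z _ => norm_mul_le _ _)
  have hcs := mul_sq_sum_le_sum_div_mul_sum (antidiagonal γ) (fsWeight_pos s (p - 1 + k) γ).le
    (u := fun z => fsWeight r p z.1 * fsWeight r p z.2)
    (fun z _ => mul_pos (fsWeight_pos r p z.1) (fsWeight_pos r p z.2))
    (fun z => ‖f z.1‖ * ‖g z.2‖)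
  calc fsTerm s (p - 1 + k) (wick f g) γ
      = fsWeight s (p - 1 + k) γ * ‖wick f g γ‖ ^ 2 := fsTerm_eq_fsWeight_mul _ _ _ _
    _ ≤ fsWeight s (p - 1 + k) γ * (∑ z ∈ antidiagonal γ, ‖f z.1‖ * ‖g z.2‖) ^ 2 := by
        gcongr
        exact (fsWeight_pos _ _ _).le
    _ ≤ _ := hcs
    _ = _ := by
        congr 1
        · exact sum_congr rfl fun z hz => by rw [wickWeight, mem_antidiagonal.1 hz]
        · exact sum_congr rfl fun z _ => by simp only [fsTerm_eq_fsWeight_mul]; ring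

theorem stmt_4_general {X : Type*} [NormedRing X] (r : ℕ) (hr : 2 ≤ r) (p : ℝ)
    (f g : MultiIndex → X)
    (hf : Summable (fsTerm r p f)) (hg : Summable (fsTerm r p g))
    (k : ℝ) (hk : 1 < k) (s : ℕ) (hs : r ≤ s) :
    Summable (fun γ : MultiIndex => wt (-k) γ) ∧
    Summable (fsTerm s (p - 1 + k) (wick f g)) ∧
    (∑' γ : MultiIndex, fsTerm s (p - 1 + k) (wick f g) γ) ≤
      (∑' γ : MultiIndex, wt (-k) γ) * (∑' α : MultiIndex, fsTerm r p f α) *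
        (∑' α : MultiIndex, fsTerm r p g α) := by
  set M := ∑' γ : MultiIndex, wt (-k) γ
  have hfg : Summable fun z : MultiIndex × MultiIndex => fsTerm r p f z.1 * fsTerm r p g z.2 :=
    hf.mul_of_nonneg hg (fsTerm_nonneg r p f) (fsTerm_nonneg r p g)
  have hcauchy := (summable_sum_mul_antidiagonal_of_summable_mul hfg).mul_left M
  have hbound (γ : MultiIndex) : fsTerm s (p - 1 + k) (wick f g) γ ≤
      M * ∑ z ∈ antidiagonal γ, fsTerm r p f z.1 * fsTerm r p g z.2 :=
    (fsTerm_wick_le r s p k f g γ).trans <| mul_le_mul_of_nonneg_right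
      (sum_wickWeight_le hr hs p hk γ)
      (sum_nonneg fun z _ => mul_nonneg (fsTerm_nonneg r p f _) (fsTerm_nonneg r p g _))
  have hwick : Summable (fsTerm s (p - 1 + k) (wick f g)) :=
    hcauchy.of_nonneg_of_le (fsTerm_nonneg _ _ _) hbound
  refine ⟨summable_wt hk, hwick, ?_⟩
  calc ∑' γ, fsTerm s (p - 1 + k) (wick f g) γ
      ≤ ∑' γ, M * ∑ z ∈ antidiagonal γ, fsTerm r p f z.1 * fsTerm r p g z.2 :=
        hwick.tsum_le_tsum hbound hcauchy
    _ = M * (∑' α, fsTerm r p f α) * ∑' α, fsTerm r p g α := by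
        rw [tsum_mul_left, ← hf.tsum_mul_tsum_eq_tsum_sum_antidiagonal hg hfg, mul_assoc]

theorem stmt_4 {X : Type*} [NormedRing X] (r : ℕ) (hr : 2 ≤ r) (p : ℝ) (hp : 0 ≤ p)
    (f g : MultiIndex → X)
    (hf : Summable (fsTerm r p f)) (hg : Summable (fsTerm r p g))
    (k : ℝ) (hk : 1 < k) (s : ℕ) (hs : r ≤ s) :
    Summable (fun γ : MultiIndex => wt (-k) γ) ∧
    Summable (fsTerm s (p - 1 + k) (wick f g)) ∧
    (∑' γ : MultiIndex, fsTerm s (p - 1 + k) (wick f g) γ) ≤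
      (∑' γ : MultiIndex, wt (-k) γ) * (∑' α : MultiIndex, fsTerm r p f α) *
        (∑' α : MultiIndex, fsTerm r p g α) :=
  stmt_4_general r hr p f g hf hg k hk s hs
end
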